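/- arXiv:2010.05284 — 3 statements merged into one kernel-verified Lean document; each statement's English description precedes it below -/
import Mathlib

section
/- In a frame L, for any family (p_i) of prime elements, the set of all meets of subfamilies, 𝔐({p_i}) = {⋀ M : M ⊆ {p_i}}, is a sublocale of L. -/
/-!
Closure under meets needs no primality: `sInf T` is the meet of the generators above it, since
every `t ∈ T` is itself a meet of generators. For a prime `p` the implication `x ⇨ p` is `⊤` when
`x ≤ p` and `p` otherwise, and `x ⇨ -` preserves meets, so `x ⇨ sInf M` is the meet of those
`m ∈ M` with `¬ x ≤ m`.
-/

def IsSublocale {L : Type*} [Order.Frame L] (S : Set L) : Prop :=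
  (∀ T ⊆ S, sInf T ∈ S) ∧ ∀ x : L, ∀ s ∈ S, x ⇨ s ∈ S

section

variable {L : Type*}

def sInfClosure [CompleteLattice L] (P : Set L) : Set L :=
  {a | ∃ M ⊆ P, a = sInf M}

theorem sInf_mem_sInfClosure [CompleteLattice L] {P T : Set L} (hT : T ⊆ sInfClosure P) :
    sInf T ∈ sInfClosure P := by
  refine ⟨{p ∈ P | sInf T ≤ p}, fun p hp => hp.1, le_antisymm (le_sInf fun p hp => hp.2) ?_⟩
  refine le_sInf fun t ht => ?_
  obtain ⟨M, hM, rfl⟩ := hT ht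
  exact le_sInf fun m hm => sInf_le ⟨hM hm, (sInf_le ht).trans (sInf_le hm)⟩

theorem InfPrime.le_or_himp_eq [HeytingAlgebra L] {p : L} (hp : InfPrime p) (x : L) :
    x ≤ p ∨ x ⇨ p = p :=
  (hp.2 (inf_himp_le : x ⊓ (x ⇨ p) ≤ p)).imp_right fun h => le_antisymm h le_himp

theorem himp_sInf_eq_sInf_of_infPrime [Order.Frame L] {M : Set L} (hM : ∀ m ∈ M, InfPrime m)
    (x : L) : x ⇨ sInf M = sInf {m ∈ M | ¬ x ≤ m} := by
  refine le_antisymm (le_sInf fun m hm => ?_) ?_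
  · calc x ⇨ sInf M ≤ x ⇨ m := himp_le_himp_left (sInf_le hm.1)
      _ = m := ((hM m hm.1).le_or_himp_eq x).resolve_left hm.2
  · refine le_himp_iff.2 (le_sInf fun m hm => ?_)
    by_cases hxm : x ≤ m
    · exact inf_le_right.trans hxm
    · exact inf_le_left.trans (sInf_le ⟨hm, hxm⟩)

theorem himp_mem_sInfClosure [Order.Frame L] {P : Set L} (hP : ∀ p ∈ P, InfPrime p) (x : L)
    {s : L} (hs : s ∈ sInfClosure P) : x ⇨ s ∈ sInfClosure P := by
  obtain ⟨M, hM, rfl⟩ := hs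
  exact ⟨_, fun m hm => hM hm.1, himp_sInf_eq_sInf_of_infPrime (fun m hm => hP m (hM hm)) x⟩

theorem isSublocale_sInfClosure [Order.Frame L] {P : Set L} (hP : ∀ p ∈ P, InfPrime p) :
    IsSublocale (sInfClosure P) :=
  ⟨fun _ hT => sInf_mem_sInfClosure hT, fun x _ hs => himp_mem_sInfClosure hP x hs⟩

end

theorem stmt_10 (L : Type*) [Order.Frame L] {ι : Type*} (p : ι → L)
    (hp : ∀ i, p i ≠ ⊤ ∧ ∀ x y : L, x ⊓ y ≤ p i → x ≤ p i ∨ y ≤ p i) :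
    IsSublocale {a : L | ∃ M ⊆ Set.range p, a = sInf M} := by
  refine isSublocale_sInfClosure ?_
  rintro _ ⟨i, rfl⟩
  exact ⟨fun h => (hp i).1 h.eq_top, fun x y => (hp i).2 x y⟩
end

section
/- Let L be a frame and a ∈ L an element equal to the meet of the primes above it. Then for every x ∈ L, x → a = ⋀{q prime : a ≤ q and x ≰ q}. -/
/-! A prime `q ≥ a` either lies above `x` or above `x ⇨ a`, since `x ⊓ (x ⇨ a) ≤ a`; this gives
`x ⇨ a ≤ q` for the primes not above `x`. Conversely, meeting the infimum of those primes with `x`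
lands below every prime above `a` (below `x` for those above `x`), hence below their meet `a`. -/

def PrimeElt {L : Type*} [Order.Frame L] (p : L) : Prop :=
  p ≠ ⊤ ∧ ∀ x y : L, x ⊓ y ≤ p → x ≤ p ∨ y ≤ p

theorem PrimeElt.himp_le_of_not_le {L : Type*} [Order.Frame L] {q a x : L} (hq : PrimeElt q)
    (haq : a ≤ q) (hxq : ¬ x ≤ q) : x ⇨ a ≤ q :=
  (hq.2 x (x ⇨ a) (inf_himp_le.trans haq)).resolve_left hxq

theorem sInf_setOf_and_not_le_inf_le {α : Type*} [CompleteLattice α] (P : α → Prop) (x : α) :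
    sInf {q | P q ∧ ¬ x ≤ q} ⊓ x ≤ sInf {q | P q} := by
  refine le_sInf fun q hq => ?_
  by_cases hxq : x ≤ q
  · exact inf_le_right.trans hxq
  · exact inf_le_left.trans (sInf_le ⟨hq, hxq⟩)

theorem stmt_17 (L : Type*) [Order.Frame L] (a : L)
    (ha : a = sInf {q : L | PrimeElt q ∧ a ≤ q}) (x : L) :
    x ⇨ a = sInf {q : L | PrimeElt q ∧ a ≤ q ∧ ¬ x ≤ q} := by
  apply le_antisymm
  · exact le_sInf fun q ⟨hq, haq, hxq⟩ => hq.himp_le_of_not_le haq hxq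
  · rw [le_himp_iff]
    calc sInf {q : L | PrimeElt q ∧ a ≤ q ∧ ¬ x ≤ q} ⊓ x
        ≤ sInf {q : L | PrimeElt q ∧ a ≤ q} := by
          simpa only [and_assoc] using sInf_setOf_and_not_le_inf_le (fun q => PrimeElt q ∧ a ≤ q) x
      _ = a := ha.symm
end

section
/- Let L be a frame and a ∈ L the meet of the primes above it. A prime p with a ≤ p satisfies (p → a) → a = p if and only if p → a ≰ p. -/
section GeneralizedHeytingAlgebra

variable {α : Type*} [GeneralizedHeytingAlgebra α] {a p : α}

theorem himp_himp_eq_top_of_himp_le (h : p ⇨ a ≤ p) : (p ⇨ a) ⇨ a = ⊤ :=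
  himp_eq_top_iff.mpr <| calc
    p ⇨ a = (p ⇨ a) ⊓ p := (inf_eq_left.mpr h).symm
    _ ≤ a := himp_inf_le

theorem himp_himp_eq_of_prime_of_not_himp_le
    (hprime : ∀ x y : α, x ⊓ y ≤ p → x ≤ p ∨ y ≤ p) (hap : a ≤ p) (h : ¬ p ⇨ a ≤ p) :
    (p ⇨ a) ⇨ a = p := by
  refine le_antisymm ?_ le_himp_himp
  rcases hprime _ _ (himp_inf_le.trans hap) with hle | hle
  · exact hle
  · exact absurd hle h

end GeneralizedHeytingAlgebra

theorem stmt_18_general (L : Type*) [Order.Frame L] (a : L)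
    (p : L)
    (hp : PrimeElt p) (hap : a ≤ p) :
    (p ⇨ a) ⇨ a = p ↔ ¬ (p ⇨ a) ≤ p := by
  refine ⟨fun h hle => hp.1 ?_, himp_himp_eq_of_prime_of_not_himp_le hp.2 hap⟩
  rw [← h, himp_himp_eq_top_of_himp_le hle]

theorem stmt_18 (L : Type*) [Order.Frame L] (a : L)
    (ha : a = sInf {q : L | PrimeElt q ∧ a ≤ q}) (p : L)
    (hp : PrimeElt p) (hap : a ≤ p) :
    (p ⇨ a) ⇨ a = p ↔ ¬ (p ⇨ a) ≤ p :=
  stmt_18_general L a p hp hap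
end
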